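/- arXiv:2506.22251 — 8 statements merged into one kernel-verified Lean document; each statement's English description precedes it below -/
import Mathlib

section
/- For every ν with 0 < ν < 4/3, G(k₊(ν);ν) = (2/27)(√(4−3ν) + 2)²(√(4−3ν) − 1); consequently G(k₊(ν);ν) > 0 if and only if ν < 1, and G(k₊(1);1) = 0. -/
/-!
With `s = √(4 - 3ν)` one has `ν = (4 - s²)/3` and `k₊(ν)² = (2 + s)/3`, so `G(k₊(ν); ν)` is a
polynomial in `s`, which factors as `(2/27)(s + 2)²(s - 1)`. Its sign is that of `s - 1`, and
`1 < s ↔ ν < 1`.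
-/

/-- G(k;ν) = −νk² + 2k⁴ − k⁶. -/
noncomputable def G (k ν : ℝ) : ℝ := -ν * k ^ 2 + 2 * k ^ 4 - k ^ 6

/-- k₊(ν) = √((4+√(16−12ν))/6). -/
noncomputable def kplus (ν : ℝ) : ℝ := Real.sqrt ((4 + Real.sqrt (16 - 12 * ν)) / 6)

theorem G_of_sq_eq {k s : ℝ} (hk : k ^ 2 = (2 + s) / 3) :
    G k ((4 - s ^ 2) / 3) = 2 / 27 * (s + 2) ^ 2 * (s - 1) := by
  have hk4 : k ^ 4 = (k ^ 2) ^ 2 := by ring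
  have hk6 : k ^ 6 = (k ^ 2) ^ 3 := by ring
  rw [G, hk4, hk6, hk]
  ring

theorem kplus_sq (ν : ℝ) : kplus ν ^ 2 = (2 + √(4 - 3 * ν)) / 3 := by
  have h16 : √(16 - 12 * ν) = 2 * √(4 - 3 * ν) := by
    rw [show (16 : ℝ) - 12 * ν = 2 ^ 2 * (4 - 3 * ν) by ring, Real.sqrt_mul (by positivity),
      Real.sqrt_sq zero_le_two]
  rw [kplus, h16, Real.sq_sqrt (by positivity)]
  ring

theorem G_kplus {ν : ℝ} (hν : ν ≤ 4 / 3) :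
    G (kplus ν) ν = 2 / 27 * (√(4 - 3 * ν) + 2) ^ 2 * (√(4 - 3 * ν) - 1) := by
  have h := G_of_sq_eq (kplus_sq ν)
  rwa [Real.sq_sqrt (by linarith), show (4 - (4 - 3 * ν)) / 3 = ν by ring] at h

theorem factored_pos_iff {s : ℝ} (hs : 0 ≤ s) : 0 < 2 / 27 * (s + 2) ^ 2 * (s - 1) ↔ 1 < s := by
  rw [mul_pos_iff_of_pos_left (by positivity), sub_pos]

theorem one_lt_sqrt_four_sub_three_mul_iff {ν : ℝ} : 1 < √(4 - 3 * ν) ↔ ν < 1 := by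
  rw [Real.lt_sqrt zero_le_one]
  constructor <;> intro h <;> linarith

/-- For 0 < ν < 4/3,
G(k₊(ν);ν) = (2/27)(√(4−3ν) + 2)²(√(4−3ν) − 1), hence G(k₊(ν);ν) > 0 iff ν < 1,
and G(k₊(1);1) = 0. -/
theorem G_at_kplus :
    (∀ ν : ℝ, 0 < ν → ν < 4 / 3 →
      G (kplus ν) ν =
          2 / 27 * (Real.sqrt (4 - 3 * ν) + 2) ^ 2 * (Real.sqrt (4 - 3 * ν) - 1) ∧
        (0 < G (kplus ν) ν ↔ ν < 1)) ∧
    G (kplus 1) 1 = 0 := by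
  refine ⟨fun ν _ hν => ?_, ?_⟩
  · have hG := G_kplus hν.le
    refine ⟨hG, ?_⟩
    rw [hG, factored_pos_iff (Real.sqrt_nonneg _), one_lt_sqrt_four_sub_three_mul_iff]
  · rw [G_kplus (by norm_num)]
    norm_num
end

section
/- Let α, β, d, K, A_p be real with B_p := 1 − K². Then for every λ ∈ ℂ, det(𝒜(0) − λI₃) = −λ(λ² + 2α(1−K²)λ + 2αβA_p²). Moreover, if α > 0 and A_p > 0, then both roots of the quadratic z² + 2α(1−K²)z + 2αβA_p² have strictly negative real part if and only if β > 0 and K² < 1; in particular, if β < 0 or K² > 1, the matrix 𝒜(0) has an eigenvalue with strictly positive real part (ODE instability of the plane wave). -/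
/-!
The second row of `𝒜(0)` vanishes, so `det(𝒜(0) - λ)` is `-λ` times the characteristic
polynomial `λ² + 2αB_p λ + 2αβA_p²` of the `(A, B)` block. For a real monic quadratic
`z² + bz + c` the Routh–Hurwitz criterion reads `b > 0 ∧ c > 0`: a non-real root has real
part `-b/2`, and a real root of a polynomial with positive coefficients is negative.
Conversely the root `(-b + √(b² - 4c))/2` has positive real part as soon as `b < 0` or `c < 0`.
-/

open Complex

theorem Matrix.det_sub_smul_one_of_second_row_zero (p q r lam : ℂ) :
    (Matrix.of ![![0, 0, p], ![0, 0, 0], ![q, 0, r]] -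
        lam • (1 : Matrix (Fin 3) (Fin 3) ℂ)).det =
      -lam * (lam ^ 2 - r * lam - p * q) := by
  rw [Matrix.det_fin_three]
  simp
  ring

section Quadratic

variable (b c : ℝ)

theorem re_eq_of_quadratic_eq_zero_of_im_ne_zero {z : ℂ} (hz : z ^ 2 + b * z + c = 0)
    (him : z.im ≠ 0) : z.re = -b / 2 := by
  have hIm : z.im * (2 * z.re + b) = 0 := by
    have := congrArg Complex.im hz
    simp only [pow_two, add_im, mul_im, ofReal_re, ofReal_im, zero_im] at this
    linear_combination this
  linarith [(mul_eq_zero.mp hIm).resolve_left him]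

/-- Since `Real.sqrt` vanishes on negative reals, the formula for the real part also covers
a negative discriminant. -/
theorem exists_quadratic_eq_zero_re_eq :
    ∃ z : ℂ, z ^ 2 + b * z + c = 0 ∧ z.re = (-b + √(b ^ 2 - 4 * c)) / 2 := by
  rcases le_or_gt 0 (b ^ 2 - 4 * c) with hd | hd
  · refine ⟨((-b + √(b ^ 2 - 4 * c)) / 2 : ℝ), ?_, by simp⟩
    have hs := Real.sq_sqrt hd
    exact_mod_cast (by linear_combination hs / 4 :
      ((-b + √(b ^ 2 - 4 * c)) / 2) ^ 2 + b * ((-b + √(b ^ 2 - 4 * c)) / 2) + c = 0)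
  · set t := √(4 * c - b ^ 2)
    have ht : (t : ℂ) ^ 2 = 4 * c - b ^ 2 := by exact_mod_cast Real.sq_sqrt (by linarith)
    refine ⟨-b / 2 + t / 2 * I, ?_, ?_⟩
    · linear_combination (t : ℂ) ^ 2 / 4 * I_sq - ht / 4
    · simp [Real.sqrt_eq_zero'.mpr hd.le]

theorem exists_quadratic_eq_zero_re_pos (h : b < 0 ∨ c < 0) :
    ∃ z : ℂ, z ^ 2 + b * z + c = 0 ∧ 0 < z.re := by
  obtain ⟨z, hz, hre⟩ := exists_quadratic_eq_zero_re_eq b c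
  refine ⟨z, hz, ?_⟩
  have : b < √(b ^ 2 - 4 * c) := by
    rcases h with hb | hc
    · exact hb.trans_le (Real.sqrt_nonneg _)
    · calc b ≤ |b| := le_abs_self b
        _ = √(b ^ 2) := (Real.sqrt_sq_eq_abs b).symm
        _ < √(b ^ 2 - 4 * c) := Real.sqrt_lt_sqrt (sq_nonneg b) (by linarith)
  rw [hre]
  linarith

/-- Routh–Hurwitz criterion for a real monic quadratic. -/
theorem quadratic_roots_re_neg_iff :
    (∀ z : ℂ, z ^ 2 + b * z + c = 0 → z.re < 0) ↔ 0 < b ∧ 0 < c := by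
  constructor
  · intro H
    obtain ⟨z, hz, hre⟩ := exists_quadratic_eq_zero_re_eq b c
    have hlt : √(b ^ 2 - 4 * c) < b := by linarith [H z hz]
    have hb : 0 < b := (Real.sqrt_nonneg _).trans_lt hlt
    have := (Real.sqrt_lt' hb).mp hlt
    exact ⟨hb, by linarith⟩
  · rintro ⟨hb, hc⟩ z hz
    by_cases him : z.im = 0
    · have hreal : z.re ^ 2 + b * z.re + c = 0 := by
        have := congrArg Complex.re hz
        simpa [pow_two, him] using this
      nlinarith
    · rw [re_eq_of_quadratic_eq_zero_of_im_ne_zero b c hz him]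
      linarith

end Quadratic

theorem ODE_stability_plane_wave_general (α β K Ap Bp : ℝ) (hBp : Bp = 1 - K ^ 2)
    (A0 : Matrix (Fin 3) (Fin 3) ℂ)
    (hA0 : A0 = Matrix.of
      ![![0, 0, -(Ap : ℂ)],
        ![0, 0, 0],
        ![2 * (α : ℂ) * (β : ℂ) * (Ap : ℂ), 0, -2 * (α : ℂ) * (Bp : ℂ)]]) :
    (∀ lam : ℂ, Matrix.det (A0 - lam • (1 : Matrix (Fin 3) (Fin 3) ℂ)) =
        -lam * (lam ^ 2 + 2 * (α : ℂ) * (1 - (K : ℂ) ^ 2) * lam +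
          2 * (α : ℂ) * (β : ℂ) * (Ap : ℂ) ^ 2)) ∧
    (0 < α → 0 < Ap →
      (((∀ z : ℂ, z ^ 2 + 2 * (α : ℂ) * (1 - (K : ℂ) ^ 2) * z +
            2 * (α : ℂ) * (β : ℂ) * (Ap : ℂ) ^ 2 = 0 → z.re < 0) ↔
          (0 < β ∧ K ^ 2 < 1)) ∧
        ((β < 0 ∨ 1 < K ^ 2) →
          ∃ lam : ℂ,
            Matrix.det (A0 - lam • (1 : Matrix (Fin 3) (Fin 3) ℂ)) = 0 ∧
            0 < lam.re))) := by
  have hdet : ∀ lam : ℂ, Matrix.det (A0 - lam • (1 : Matrix (Fin 3) (Fin 3) ℂ)) =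
      -lam * (lam ^ 2 + 2 * (α : ℂ) * (1 - (K : ℂ) ^ 2) * lam +
        2 * (α : ℂ) * (β : ℂ) * (Ap : ℂ) ^ 2) := by
    intro lam
    rw [hA0, Matrix.det_sub_smul_one_of_second_row_zero, hBp]
    push_cast
    ring
  refine ⟨hdet, fun hα hAp => ?_⟩
  have hb : ((2 * α * (1 - K ^ 2) : ℝ) : ℂ) = 2 * (α : ℂ) * (1 - (K : ℂ) ^ 2) := by
    push_cast; ring
  have hc : ((2 * α * β * Ap ^ 2 : ℝ) : ℂ) = 2 * (α : ℂ) * (β : ℂ) * (Ap : ℂ) ^ 2 :=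
    by push_cast; ring
  have hb_pos : 0 < 2 * α * (1 - K ^ 2) ↔ K ^ 2 < 1 := by
    rw [mul_pos_iff_of_pos_left (by positivity), sub_pos]
  have hc_pos : 0 < 2 * α * β * Ap ^ 2 ↔ 0 < β := by
    rw [mul_pos_iff_of_pos_right (by positivity),
      mul_pos_iff_of_pos_left (by positivity)]
  simp only [← hb, ← hc] at hdet ⊢
  refine ⟨by rw [quadratic_roots_re_neg_iff, hb_pos, hc_pos, and_comm], fun h => ?_⟩
  have hneg : 2 * α * (1 - K ^ 2) < 0 ∨ 2 * α * β * Ap ^ 2 < 0 := by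
    rcases h with hβ | hK
    · exact Or.inr <|
        mul_neg_of_neg_of_pos (mul_neg_of_pos_of_neg (by positivity) hβ) (by positivity)
    · exact Or.inl (mul_neg_of_pos_of_neg (by positivity) (by linarith))
  obtain ⟨z, hz, hre⟩ := exists_quadratic_eq_zero_re_pos _ _ hneg
  exact ⟨z, by rw [hdet, hz, mul_zero], hre⟩

/-- with B_p = 1 − K², for all λ ∈ ℂ,
det(𝒜(0) − λI₃) = −λ(λ² + 2α(1−K²)λ + 2αβA_p²). Moreover if α > 0 and A_p > 0,
both roots of z² + 2α(1−K²)z + 2αβA_p² have negative real part iff β > 0 and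
K² < 1; in particular if β < 0 or K² > 1 then 𝒜(0) has an eigenvalue with
strictly positive real part. -/
theorem ODE_stability_plane_wave (α β d K Ap Bp : ℝ) (hBp : Bp = 1 - K ^ 2)
    (A0 : Matrix (Fin 3) (Fin 3) ℂ)
    (hA0 : A0 = Matrix.of
      ![![0, 0, -(Ap : ℂ)],
        ![0, 0, 0],
        ![2 * (α : ℂ) * (β : ℂ) * (Ap : ℂ), 0, -2 * (α : ℂ) * (Bp : ℂ)]]) :
    (∀ lam : ℂ, Matrix.det (A0 - lam • (1 : Matrix (Fin 3) (Fin 3) ℂ)) =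
        -lam * (lam ^ 2 + 2 * (α : ℂ) * (1 - (K : ℂ) ^ 2) * lam +
          2 * (α : ℂ) * (β : ℂ) * (Ap : ℂ) ^ 2)) ∧
    (0 < α → 0 < Ap →
      (((∀ z : ℂ, z ^ 2 + 2 * (α : ℂ) * (1 - (K : ℂ) ^ 2) * z +
            2 * (α : ℂ) * (β : ℂ) * (Ap : ℂ) ^ 2 = 0 → z.re < 0) ↔
          (0 < β ∧ K ^ 2 < 1)) ∧
        ((β < 0 ∨ 1 < K ^ 2) →
          ∃ lam : ℂ,
            Matrix.det (A0 - lam • (1 : Matrix (Fin 3) (Fin 3) ℂ)) = 0 ∧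
            0 < lam.re))) :=
  ODE_stability_plane_wave_general α β K Ap Bp hBp A0 hA0
end

section
/- Let α, d > 0, β > 0, K² < 1 and R > 1 − (1−K²)², and set P := (1−K²)² + R − 1 > 0. Define the real polynomial q(m,λ) := −2αP(m+λ) + (−2α(1−K²) − dαm − λ)((m+λ)² − 4mK²). Then q(0,0) = 0, ∂q/∂λ(0,0) = −2αP ≠ 0, and there exist ε > 0 and a differentiable function λ₁ : (−ε, ε) → ℝ with λ₁(0) = 0, q(m, λ₁(m)) = 0 for all |m| < ε, and λ₁'(0) = (6K² − 5K⁴ − R)/P. In particular the critical (sideband) eigenvalue branch satisfies λ₁'(0) < 0 if and only if R > R_s(K) := 6K² − 5K⁴. -/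
/-!
Since `P > 0`, `λ = 0` is a simple root of `q(0, λ) = -2αPλ - 2α(1 - K²)λ² - λ³`, so the
implicit function theorem continues it to a C¹ branch `λ₁(m)` with slope
`λ₁'(0) = -∂ₘq(0,0) / ∂_λq(0,0) = (-2αP + 8αK²(1 - K²)) / (2αP)`, which is
`(6K² - 5K⁴ - R) / P` once `P = (1 - K²)² + R - 1` is substituted.
-/

open Filter Topology ContinuousLinearMap

section OneDimensional

variable {𝕜 : Type*} [NontriviallyNormedField 𝕜] {T : 𝕜 →L[𝕜] 𝕜}

theorem ContinuousLinearMap.isInvertible_of_apply_one_ne_zero (hT : T 1 ≠ 0) : T.IsInvertible :=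
  ⟨ContinuousLinearEquiv.unitsEquivAut 𝕜 (Units.mk0 (T 1) hT), ext_ring (by simp)⟩

theorem ContinuousLinearMap.inverse_apply_of_apply_one_ne_zero (hT : T 1 ≠ 0) (y : 𝕜) :
    T.inverse y = y / T 1 := by
  have hy : T (y / T 1) = y := by
    rw [← mul_one (y / T 1), ← smul_eq_mul, map_smul, smul_eq_mul, div_mul_cancel₀ _ hT]
  calc T.inverse y = T.inverse (T (y / T 1)) := by rw [hy]
    _ = y / T 1 := IsInvertible.inverse_apply_self (isInvertible_of_apply_one_ne_zero hT) _

theorem hasDerivAt_cubic_zero (a b c : 𝕜) :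
    HasDerivAt (fun x => a * x + b * x ^ 2 + c * x ^ 3) a 0 :=
  ((((hasDerivAt_id (0 : 𝕜)).const_mul a).add
    (((hasDerivAt_id (0 : 𝕜)).pow 2).const_mul b)).add
      (((hasDerivAt_id (0 : 𝕜)).pow 3).const_mul c)).congr_deriv (by simp)

end OneDimensional

theorem exists_implicit_branch {𝕜 : Type*} [RCLike 𝕜] {f : 𝕜 × 𝕜 → 𝕜}
    {x₀ y₀ a b : 𝕜} (hf : ContDiffAt 𝕜 1 f (x₀, y₀))
    (ha : HasDerivAt (fun x => f (x, y₀)) a x₀)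
    (hb : HasDerivAt (fun y => f (x₀, y)) b y₀) (hb₀ : b ≠ 0) :
    ∃ ψ : 𝕜 → 𝕜, ψ x₀ = y₀ ∧
      (∀ᶠ x in 𝓝 x₀, DifferentiableAt 𝕜 ψ x ∧ f (x, ψ x) = f (x₀, y₀)) ∧
      HasDerivAt ψ (-a / b) x₀ := by
  set L := fderiv 𝕜 f (x₀, y₀)
  have hL : HasFDerivAt f L (x₀, y₀) := (hf.differentiableAt one_ne_zero).hasFDerivAt
  have hLa : L (1, 0) = a :=
    (hL.comp_hasDerivAt x₀ ((hasDerivAt_id x₀).prodMk (hasDerivAt_const x₀ y₀))).unique ha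
  have hLb : (L ∘L inr 𝕜 𝕜 𝕜) 1 = b :=
    (hL.comp_hasDerivAt y₀ ((hasDerivAt_const y₀ x₀).prodMk (hasDerivAt_id y₀))).unique hb
  have hinv : (L ∘L inr 𝕜 𝕜 𝕜).IsInvertible :=
    isInvertible_of_apply_one_ne_zero (hLb ▸ hb₀)
  refine ⟨hf.implicitFunction one_ne_zero hinv, hf.implicitFunction_apply_self one_ne_zero hinv,
    ?_, ?_⟩
  · filter_upwards [(hf.contDiffAt_implicitFunction one_ne_zero hinv).eventually (by simp),
      hf.eventually_apply_implicitFunction one_ne_zero hinv] with x hx hfx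
    exact ⟨hx.differentiableAt one_ne_zero, hfx⟩
  · have hψ' : HasDerivAt (hf.implicitFunction one_ne_zero hinv)
        (-(L ∘L inr 𝕜 𝕜 𝕜).inverse (L (1, 0))) x₀ :=
      (hf.hasStrictFDerivAt_implicitFunction one_ne_zero hinv).hasFDerivAt.hasDerivAt
    rwa [hLa, inverse_apply_of_apply_one_ne_zero (hLb ▸ hb₀), hLb, ← neg_div] at hψ'

theorem sideband_eigenvalue_branch_general (α d K R : ℝ)
    (hα : 0 < α)
    (hR : 1 - (1 - K ^ 2) ^ 2 < R)
    (P : ℝ) (hP : P = (1 - K ^ 2) ^ 2 + R - 1)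
    (q : ℝ → ℝ → ℝ)
    (hq : ∀ m lam : ℝ, q m lam =
      -2 * α * P * (m + lam) +
        (-2 * α * (1 - K ^ 2) - d * α * m - lam) * ((m + lam) ^ 2 - 4 * m * K ^ 2)) :
    0 < P ∧
    q 0 0 = 0 ∧
    deriv (fun lam => q 0 lam) 0 = -2 * α * P ∧
    -2 * α * P ≠ 0 ∧
    ∃ ε > 0, ∃ lam1 : ℝ → ℝ,
      lam1 0 = 0 ∧
      (∀ m : ℝ, |m| < ε → DifferentiableAt ℝ lam1 m ∧ q m (lam1 m) = 0) ∧
      deriv lam1 0 = (6 * K ^ 2 - 5 * K ^ 4 - R) / P ∧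
      (deriv lam1 0 < 0 ↔ 6 * K ^ 2 - 5 * K ^ 4 < R) := by
  have hPpos : 0 < P := by rw [hP]; linarith
  have hderiv_lam_ne : -2 * α * P ≠ 0 := (mul_neg_of_neg_of_pos (by linarith) hPpos).ne
  have hq₀ : q 0 0 = 0 := by rw [hq]; ring
  have hderiv_lam : HasDerivAt (fun lam => q 0 lam) (-2 * α * P) 0 := by
    have hsection : (fun lam => q 0 lam) =
        fun lam => -2 * α * P * lam + -2 * α * (1 - K ^ 2) * lam ^ 2 + -1 * lam ^ 3 := by
      funext lam; rw [hq]; ring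
    rw [hsection]; exact hasDerivAt_cubic_zero _ _ _
  have hderiv_m : HasDerivAt (fun m => q m 0) (-2 * α * P + 8 * α * (1 - K ^ 2) * K ^ 2) 0 := by
    have hsection : (fun m => q m 0) = fun m => (-2 * α * P + 8 * α * (1 - K ^ 2) * K ^ 2) * m +
        (-2 * α * (1 - K ^ 2) + 4 * d * α * K ^ 2) * m ^ 2 + -(d * α) * m ^ 3 := by
      funext m; rw [hq]; ring
    rw [hsection]; exact hasDerivAt_cubic_zero _ _ _
  have hsmooth : ContDiffAt ℝ 1 (fun p : ℝ × ℝ => q p.1 p.2) (0, 0) := by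
    simp only [hq]; fun_prop
  obtain ⟨lam1, hlam1₀, hbranch, hslope⟩ :=
    exists_implicit_branch hsmooth hderiv_m hderiv_lam hderiv_lam_ne
  obtain ⟨ε, hε, hball⟩ := Metric.eventually_nhds_iff.1 hbranch
  have hderiv_lam1 : deriv lam1 0 = (6 * K ^ 2 - 5 * K ^ 4 - R) / P := by
    rw [hslope.deriv, div_eq_div_iff hderiv_lam_ne hPpos.ne', hP]; ring
  refine ⟨hPpos, hq₀, hderiv_lam.deriv, hderiv_lam_ne, ε, hε, lam1, hlam1₀, fun m hm => ?_,
    hderiv_lam1, ?_⟩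
  · rw [← hq₀]; exact hball (by rwa [Real.dist_0_eq_abs])
  · rw [hderiv_lam1, div_lt_iff₀ hPpos, zero_mul, sub_neg]

/-- sideband stability. With P = (1−K²)² + R − 1 > 0 and
q(m,λ) = −2αP(m+λ) + (−2α(1−K²) − dαm − λ)((m+λ)² − 4mK²), one has q(0,0) = 0,
∂q/∂λ(0,0) = −2αP ≠ 0, and there is a differentiable branch λ₁ with λ₁(0) = 0,
q(m,λ₁(m)) = 0 for |m| < ε and λ₁'(0) = (6K² − 5K⁴ − R)/P; in particular
λ₁'(0) < 0 iff R > 6K² − 5K⁴. -/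
theorem sideband_eigenvalue_branch (α d β K R : ℝ)
    (hα : 0 < α) (hd : 0 < d) (hβ : 0 < β)
    (hK : K ^ 2 < 1) (hR : 1 - (1 - K ^ 2) ^ 2 < R)
    (P : ℝ) (hP : P = (1 - K ^ 2) ^ 2 + R - 1)
    (q : ℝ → ℝ → ℝ)
    (hq : ∀ m lam : ℝ, q m lam =
      -2 * α * P * (m + lam) +
        (-2 * α * (1 - K ^ 2) - d * α * m - lam) * ((m + lam) ^ 2 - 4 * m * K ^ 2)) :
    0 < P ∧
    q 0 0 = 0 ∧
    deriv (fun lam => q 0 lam) 0 = -2 * α * P ∧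
    -2 * α * P ≠ 0 ∧
    ∃ ε > 0, ∃ lam1 : ℝ → ℝ,
      lam1 0 = 0 ∧
      (∀ m : ℝ, |m| < ε → DifferentiableAt ℝ lam1 m ∧ q m (lam1 m) = 0) ∧
      deriv lam1 0 = (6 * K ^ 2 - 5 * K ^ 4 - R) / P ∧
      (deriv lam1 0 < 0 ↔ 6 * K ^ 2 - 5 * K ^ 4 < R) :=
  sideband_eigenvalue_branch_general α d K R hα hR P hP q hq
end

section
/- Let α ≠ 0, d ≠ 0, and K, P ∈ ℝ, with B_p := 1 − K², and define q(m,λ) := −2αP(m+λ) + (−2αB_p − dαm − λ)((m+λ)² − 4mK²). Then the identity 2q(m,0) − 2m·∂q/∂m(m,0) = 4αm²(B_p + d(m − 2K²)) holds for all m; consequently, if m_c ≠ 0 satisfies q(m_c,0) = 0 and ∂q/∂m(m_c,0) = 0, then m_c = 2K² − B_p/d = ((2d+1)K² − 1)/d. (Thus a Turing instability of the plane wave can occur only at squared wavenumber k_c² = ((2d+1)K² − 1)/d, and only if K² > 1/(2d+1).) -/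
/-!
At `λ = 0` the determinant `q(·, 0)` is a cubic `a m³ + b m² + c m` without constant term, and
`f ↦ f - m f'` multiplies the monomial `mⁿ` by `1 - n`: it annihilates the linear term, the only
one involving `P`, and leaves `-m² (2 a m + b)`. At a nonzero double root the left-hand side
vanishes, so `m_c` is the root of the linear factor `2 a m + b`.
-/

section Cubic

variable {𝕜 : Type*} [NontriviallyNormedField 𝕜] (a b c : 𝕜)

theorem hasDerivAt_cubic (x : 𝕜) :
    HasDerivAt (fun x => a * x ^ 3 + b * x ^ 2 + c * x) (3 * a * x ^ 2 + 2 * b * x + c) x := by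
  have h3 := (hasDerivAt_pow 3 x).const_mul a
  have h2 := (hasDerivAt_pow 2 x).const_mul b
  have h1 := (hasDerivAt_id' x).const_mul c
  exact ((h3.add h2).add h1).congr_deriv (by norm_num; ring)

theorem cubic_sub_mul_deriv_cubic (x : 𝕜) :
    (a * x ^ 3 + b * x ^ 2 + c * x) - x * deriv (fun x => a * x ^ 3 + b * x ^ 2 + c * x) x =
      -x ^ 2 * (2 * a * x + b) := by
  rw [(hasDerivAt_cubic a b c x).deriv]
  ring

end Cubic

/-- with B_p = 1 − K² and
q(m,λ) = −2αP(m+λ) + (−2αB_p − dαm − λ)((m+λ)² − 4mK²), the identity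
2q(m,0) − 2m·∂q/∂m(m,0) = 4αm²(B_p + d(m − 2K²)) holds; hence a nonzero
double root m_c of q(·,0) must equal ((2d+1)K² − 1)/d. -/
theorem turing_instability_wavenumber (α d K P : ℝ)
    (hα : α ≠ 0) (hd : d ≠ 0)
    (Bp : ℝ) (hBp : Bp = 1 - K ^ 2)
    (q : ℝ → ℝ → ℝ)
    (hq : ∀ m lam : ℝ, q m lam =
      -2 * α * P * (m + lam) +
        (-2 * α * Bp - d * α * m - lam) * ((m + lam) ^ 2 - 4 * m * K ^ 2)) :
    (∀ m : ℝ,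
      2 * q m 0 - 2 * m * deriv (fun x => q x 0) m =
        4 * α * m ^ 2 * (Bp + d * (m - 2 * K ^ 2))) ∧
    (∀ mc : ℝ, mc ≠ 0 → q mc 0 = 0 → deriv (fun x => q x 0) mc = 0 →
      mc = ((2 * d + 1) * K ^ 2 - 1) / d) := by
  have hcubic : (fun x => q x 0) = fun x =>
      -(d * α) * x ^ 3 + α * (4 * d * K ^ 2 - 2 * Bp) * x ^ 2 +
        (8 * α * Bp * K ^ 2 - 2 * α * P) * x := by
    funext x
    rw [hq]
    ring
  have identity (m : ℝ) : 2 * q m 0 - 2 * m * deriv (fun x => q x 0) m =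
      4 * α * m ^ 2 * (Bp + d * (m - 2 * K ^ 2)) := by
    rw [show q m 0 = _ from congrFun hcubic m, hcubic]
    linear_combination 2 * cubic_sub_mul_deriv_cubic (-(d * α)) (α * (4 * d * K ^ 2 - 2 * Bp))
      (8 * α * Bp * K ^ 2 - 2 * α * P) m
  refine ⟨identity, fun mc hmc hroot hcrit => ?_⟩
  have hlinear : Bp + d * (mc - 2 * K ^ 2) = 0 := by
    have h : 4 * α * mc ^ 2 * (Bp + d * (mc - 2 * K ^ 2)) = 0 := by
      linear_combination -identity mc + 2 * hroot - 2 * mc * hcrit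
    have hscale : 4 * α * mc ^ 2 ≠ 0 := by positivity
    exact (mul_eq_zero.mp h).resolve_left hscale
  field_simp
  linear_combination hlinear - hBp
end

section
/- Let α ∈ ℝ, d ≠ 0, K, R ∈ ℝ, set B_p := 1 − K², P := (1−K²)² + R − 1, m_c := ((2d+1)K² − 1)/d, and q(m,λ) := −2αP(m+λ) + (−2αB_p − dαm − λ)((m+λ)² − 4mK²). Then q(m_c, 0) = −2αm_c(R − R_t(K)), where R_t(K) := 1 + (1 + (2d−1)K²)²/(2d) − (1−K²)². In particular (for α > 0, m_c > 0) q(m_c,0) vanishes exactly at R = R_t(K), is positive for R < R_t(K) and negative for R > R_t(K). -/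
/-!
Since `q(m, 0) = -α m (2P + (2B_p + d m)(m - 4K²))`, everything hinges on the bracket at `m = m_c`.
With `s := 1 + (2d-1)K²` the choice of `m_c` gives `2B_p + d m_c = s` and `d (m_c - 4K²) = -s`,
so the bracket is `2P - s²/d = 2(R - R_t(K))`. The sign statements then follow because
`-2α m_c < 0`.
-/

theorem charDet_at_zero_factor (α d K P Bp m : ℝ) :
    -2 * α * P * (m + 0) + (-2 * α * Bp - d * α * m - 0) * ((m + 0) ^ 2 - 4 * m * K ^ 2) =
      -α * m * (2 * P + (2 * Bp + d * m) * (m - 4 * K ^ 2)) := by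
  ring

theorem charDet_bracket_at_critical (d K R : ℝ) (hd : d ≠ 0) :
    let mc := ((2 * d + 1) * K ^ 2 - 1) / d
    2 * ((1 - K ^ 2) ^ 2 + R - 1) + (2 * (1 - K ^ 2) + d * mc) * (mc - 4 * K ^ 2) =
      2 * (R - (1 + (1 + (2 * d - 1) * K ^ 2) ^ 2 / (2 * d) - (1 - K ^ 2) ^ 2)) := by
  intro mc
  have hdmc : d * mc = (2 * d + 1) * K ^ 2 - 1 := mul_div_cancel₀ _ hd
  have hsum : 2 * (1 - K ^ 2) + d * mc = 1 + (2 * d - 1) * K ^ 2 := by rw [hdmc]; ring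
  have hdiff : mc - 4 * K ^ 2 = -(1 + (2 * d - 1) * K ^ 2) / d := by
    rw [eq_div_iff hd, sub_mul, mul_comm mc, hdmc]; ring
  rw [hsum, hdiff]
  field_simp
  ring

theorem neg_mul_sub_sign {c a b : ℝ} (hc : 0 < c) :
    (-c * (a - b) = 0 ↔ a = b) ∧ (a < b → 0 < -c * (a - b)) ∧ (b < a → -c * (a - b) < 0) := by
  refine ⟨?_, fun h => ?_, fun h => ?_⟩
  · simp [hc.ne', sub_eq_zero]
  · exact mul_pos_of_neg_of_neg (neg_neg_of_pos hc) (sub_neg.mpr h)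
  · exact mul_neg_of_neg_of_pos (neg_neg_of_pos hc) (sub_pos.mpr h)

/-- with B_p = 1 − K², P = (1−K²)² + R − 1,
m_c = ((2d+1)K² − 1)/d and R_t(K) = 1 + (1 + (2d−1)K²)²/(2d) − (1−K²)², one has
q(m_c,0) = −2αm_c(R − R_t(K)); in particular (for α > 0, m_c > 0) q(m_c,0)
vanishes exactly at R = R_t(K), is positive for R < R_t(K) and negative for
R > R_t(K). -/
theorem turing_instability_curve (α d K R : ℝ) (hd : d ≠ 0)
    (Bp P mc Rt : ℝ)
    (hBp : Bp = 1 - K ^ 2)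
    (hP : P = (1 - K ^ 2) ^ 2 + R - 1)
    (hmc : mc = ((2 * d + 1) * K ^ 2 - 1) / d)
    (hRt : Rt = 1 + (1 + (2 * d - 1) * K ^ 2) ^ 2 / (2 * d) - (1 - K ^ 2) ^ 2)
    (q : ℝ → ℝ → ℝ)
    (hq : ∀ m lam : ℝ, q m lam =
      -2 * α * P * (m + lam) +
        (-2 * α * Bp - d * α * m - lam) * ((m + lam) ^ 2 - 4 * m * K ^ 2)) :
    q mc 0 = -2 * α * mc * (R - Rt) ∧
    (0 < α → 0 < mc →
      (q mc 0 = 0 ↔ R = Rt) ∧ (R < Rt → 0 < q mc 0) ∧ (Rt < R → q mc 0 < 0)) := by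
  have key : q mc 0 = -2 * α * mc * (R - Rt) := by
    rw [hq, charDet_at_zero_factor, hBp, hP, hmc, charDet_bracket_at_critical d K R hd, hRt]
    ring
  refine ⟨key, fun hα hmc0 => ?_⟩
  have hneg : -2 * α * mc = -(2 * α * mc) := by ring
  rw [key, hneg]
  exact neg_mul_sub_sign (by positivity)
end

section
/- Let d > 0 and define R_s(K) := 6K² − 5K⁴ and R_t(K) := 1 + (1+(2d−1)K²)²/(2d) − (1−K²)². Then for every real K, R_t(K) − R_s(K) = (1 − (2d+1)K²)²/(2d). Consequently R_t(K) ≥ R_s(K) for all K, with equality if and only if K² = 1/(2d+1), and at K² = 1/(2d+1) the common value is R_t(K) = R_s(K) = (12d+1)/(2d+1)²; i.e., the sideband-instability curve and the Turing-instability curve of the plane waves are tangent at (K, R) = (±1/√(2d+1), (12d+1)/(2d+1)²). -/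
/-!
Expanding both curves, `R_t - R_s` is the perfect square `(1 - (2d+1)K²)² / (2d)`, so the
Turing curve lies above the sideband curve and touches it exactly where `(2d+1)K² = 1`; the common
value there is `6s - 5s²` at `s = 1/(2d+1)`.
-/

/-- The sideband-stability boundary `R_s(K)`. -/
def sidebandCurve (K : ℝ) : ℝ := 6 * K ^ 2 - 5 * K ^ 4

/-- The Turing-instability boundary `R_t(K)` for diffusion ratio `d`. -/
noncomputable def turingCurve (d K : ℝ) : ℝ :=
  1 + (1 + (2 * d - 1) * K ^ 2) ^ 2 / (2 * d) - (1 - K ^ 2) ^ 2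

section

variable {d : ℝ} (K : ℝ)

theorem turingCurve_sub_sidebandCurve (hd : d ≠ 0) :
    turingCurve d K - sidebandCurve K = (1 - (2 * d + 1) * K ^ 2) ^ 2 / (2 * d) := by
  unfold turingCurve sidebandCurve
  field_simp
  ring

theorem sidebandCurve_le_turingCurve (hd : 0 < d) : sidebandCurve K ≤ turingCurve d K := by
  have hsq : 0 ≤ (1 - (2 * d + 1) * K ^ 2) ^ 2 / (2 * d) := by positivity
  linarith [turingCurve_sub_sidebandCurve K hd.ne']

theorem turingCurve_eq_sidebandCurve_iff (hd : 0 < d) :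
    turingCurve d K = sidebandCurve K ↔ K ^ 2 = 1 / (2 * d + 1) := by
  have hd₁ : 2 * d + 1 ≠ 0 := by positivity
  calc turingCurve d K = sidebandCurve K
      ↔ (1 - (2 * d + 1) * K ^ 2) ^ 2 / (2 * d) = 0 := by
        rw [← turingCurve_sub_sidebandCurve K hd.ne', sub_eq_zero]
    _ ↔ (2 * d + 1) * K ^ 2 = 1 := by
        rw [div_eq_zero_iff, or_iff_left (by positivity), sq_eq_zero_iff, sub_eq_zero, eq_comm]
    _ ↔ K ^ 2 = 1 / (2 * d + 1) := by
        rw [eq_div_iff hd₁, mul_comm]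

theorem sidebandCurve_of_sq_eq (hd : 2 * d + 1 ≠ 0) (hK : K ^ 2 = 1 / (2 * d + 1)) :
    sidebandCurve K = (12 * d + 1) / (2 * d + 1) ^ 2 := by
  rw [sidebandCurve, show K ^ 4 = (K ^ 2) ^ 2 by ring, hK]
  field_simp
  ring

end

/-- with R_s(K) = 6K² − 5K⁴ and
R_t(K) = 1 + (1+(2d−1)K²)²/(2d) − (1−K²)², one has
R_t(K) − R_s(K) = (1 − (2d+1)K²)²/(2d) ≥ 0, with equality iff K² = 1/(2d+1),
and there the common value is (12d+1)/(2d+1)². -/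
theorem sideband_turing_tangency (d : ℝ) (hd : 0 < d)
    (Rs Rt : ℝ → ℝ)
    (hRs : ∀ K : ℝ, Rs K = 6 * K ^ 2 - 5 * K ^ 4)
    (hRt : ∀ K : ℝ,
      Rt K = 1 + (1 + (2 * d - 1) * K ^ 2) ^ 2 / (2 * d) - (1 - K ^ 2) ^ 2) :
    ∀ K : ℝ,
      Rt K - Rs K = (1 - (2 * d + 1) * K ^ 2) ^ 2 / (2 * d) ∧
      Rs K ≤ Rt K ∧
      (Rt K = Rs K ↔ K ^ 2 = 1 / (2 * d + 1)) ∧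
      (K ^ 2 = 1 / (2 * d + 1) →
        Rt K = (12 * d + 1) / (2 * d + 1) ^ 2 ∧
        Rs K = (12 * d + 1) / (2 * d + 1) ^ 2) := by
  obtain rfl : Rs = sidebandCurve := funext hRs
  obtain rfl : Rt = turingCurve d := funext hRt
  intro K
  refine ⟨turingCurve_sub_sidebandCurve K hd.ne', sidebandCurve_le_turingCurve K hd,
    turingCurve_eq_sidebandCurve_iff K hd, fun hK => ?_⟩
  have hRs_val := sidebandCurve_of_sq_eq K (by positivity) hK
  exact ⟨((turingCurve_eq_sidebandCurve_iff K hd).mpr hK).trans hRs_val, hRs_val⟩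
end

section
/- (Eigenvalue perturbation formula of Lancaster.) Let n ≥ 1, let C : ℝ → ℝ^{n×n} be a matrix-valued function whose entries are differentiable at t₀, let λ : ℝ → ℝ and v : ℝ → ℝⁿ be differentiable at t₀ and satisfy C(t)v(t) = λ(t)v(t) for all t in a neighborhood of t₀, and let p ∈ ℝⁿ be a left eigenvector of C(t₀) for the eigenvalue λ(t₀) (i.e., pᵀC(t₀) = λ(t₀)pᵀ) with ⟨v(t₀), p⟩ ≠ 0. Then λ'(t₀) = ⟨C'(t₀)v(t₀), p⟩ / ⟨v(t₀), p⟩, where C'(t₀) denotes the entrywise derivative of C at t₀ and ⟨·,·⟩ the standard inner product on ℝⁿ. -/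
open Filter Topology Matrix

section Calculus

variable {𝕜 : Type*} [NontriviallyNormedField 𝕜] {ι κ : Type*} [Fintype ι] {x : 𝕜}

theorem HasDerivAt.dotProduct {u w : 𝕜 → ι → 𝕜} {u' w' : ι → 𝕜}
    (hu : HasDerivAt u u' x) (hw : HasDerivAt w w' x) :
    HasDerivAt (fun t => u t ⬝ᵥ w t) (u' ⬝ᵥ w x + u x ⬝ᵥ w') x := by
  simp only [_root_.dotProduct, ← Finset.sum_add_distrib]
  exact HasDerivAt.fun_sum fun i _ =>
    (hasDerivAt_pi.1 hu i).mul (hasDerivAt_pi.1 hw i)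

theorem HasDerivAt.mulVec {C : 𝕜 → Matrix κ ι 𝕜} {C' : Matrix κ ι 𝕜} {v : 𝕜 → ι → 𝕜}
    {v' : ι → 𝕜} (hC : ∀ i j, HasDerivAt (fun t => C t i j) (C' i j) x)
    (hv : HasDerivAt v v' x) :
    HasDerivAt (fun t => C t *ᵥ v t) (C' *ᵥ v x + C x *ᵥ v') x :=
  hasDerivAt_pi.2 fun i => (hasDerivAt_pi.2 (hC i)).dotProduct hv

end Calculus

theorem Matrix.mulVec_dotProduct_of_vecMul_eq_smul {R ι : Type*} [CommSemiring R] [Fintype ι]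
    {M : Matrix ι ι R} {p : ι → R} {μ : R} (hp : p ᵥ* M = μ • p) (w : ι → R) :
    (M *ᵥ w) ⬝ᵥ p = μ * (w ⬝ᵥ p) := by
  rw [dotProduct_comm, dotProduct_mulVec, hp, smul_dotProduct, dotProduct_comm, smul_eq_mul]

/-- Differentiating `⟨C v, p⟩ = λ ⟨v, p⟩` produces the term `⟨C v', p⟩ = λ ⟨v', p⟩`, which the
left eigenvector `p` cancels from both sides. -/
theorem HasDerivAt.eigenvalue_mul_dotProduct {𝕜 ι : Type*} [NontriviallyNormedField 𝕜]
    [Fintype ι] {C : 𝕜 → Matrix ι ι 𝕜} {C' : Matrix ι ι 𝕜} {lam : 𝕜 → 𝕜} {lam' x : 𝕜}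
    {v : 𝕜 → ι → 𝕜} {v' p : ι → 𝕜} (hC : ∀ i j, HasDerivAt (fun t => C t i j) (C' i j) x)
    (hlam : HasDerivAt lam lam' x) (hv : HasDerivAt v v' x)
    (heig : ∀ᶠ t in 𝓝 x, C t *ᵥ v t = lam t • v t) (hp : p ᵥ* C x = lam x • p) :
    lam' * (v x ⬝ᵥ p) = (C' *ᵥ v x) ⬝ᵥ p := by
  have hvp : HasDerivAt (fun t => v t ⬝ᵥ p) (v' ⬝ᵥ p) x := by
    simpa using hv.dotProduct (hasDerivAt_const x p)
  have hlhs : HasDerivAt (fun t => (C t *ᵥ v t) ⬝ᵥ p) ((C' *ᵥ v x + C x *ᵥ v') ⬝ᵥ p) x := by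
    simpa using (hv.mulVec hC).dotProduct (hasDerivAt_const x p)
  have hrhs : HasDerivAt (fun t => (C t *ᵥ v t) ⬝ᵥ p)
      (lam' * (v x ⬝ᵥ p) + lam x * (v' ⬝ᵥ p)) x := by
    refine (hlam.fun_mul hvp).congr_of_eventuallyEq ?_
    filter_upwards [heig] with t ht
    rw [ht, smul_dotProduct, smul_eq_mul]
  have h := hlhs.unique hrhs
  rw [add_dotProduct, mulVec_dotProduct_of_vecMul_eq_smul hp] at h
  exact (add_right_cancel h).symm

theorem lancaster_eigenvalue_derivative_general (n : ℕ)
    (C : ℝ → Matrix (Fin n) (Fin n) ℝ) (C' : Matrix (Fin n) (Fin n) ℝ) (t₀ : ℝ)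
    (hC : ∀ i j : Fin n, HasDerivAt (fun t => C t i j) (C' i j) t₀)
    (lam : ℝ → ℝ) (v : ℝ → Fin n → ℝ)
    (hlam : DifferentiableAt ℝ lam t₀)
    (hv : DifferentiableAt ℝ v t₀)
    (heig : ∀ᶠ t in 𝓝 t₀, (C t).mulVec (v t) = lam t • v t)
    (p : Fin n → ℝ)
    (hp : Matrix.vecMul p (C t₀) = lam t₀ • p)
    (hvp : dotProduct (v t₀) p ≠ 0) :
    deriv lam t₀ =
      dotProduct (C'.mulVec (v t₀)) p / dotProduct (v t₀) p := by
  rw [eq_div_iff hvp]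
  exact hlam.hasDerivAt.eigenvalue_mul_dotProduct hC hv.hasDerivAt heig hp

/-- Lancaster's eigenvalue perturbation formula: if C(t)v(t) = λ(t)v(t)
near t₀, λ and v are differentiable at t₀, the entries of C are differentiable at t₀
with derivative matrix C', p is a left eigenvector of C(t₀) for λ(t₀) and
⟨v(t₀),p⟩ ≠ 0, then λ'(t₀) = ⟨C'v(t₀),p⟩ / ⟨v(t₀),p⟩. -/
theorem lancaster_eigenvalue_derivative (n : ℕ) (hn : 1 ≤ n)
    (C : ℝ → Matrix (Fin n) (Fin n) ℝ) (C' : Matrix (Fin n) (Fin n) ℝ) (t₀ : ℝ)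
    (hC : ∀ i j : Fin n, HasDerivAt (fun t => C t i j) (C' i j) t₀)
    (lam : ℝ → ℝ) (v : ℝ → Fin n → ℝ)
    (hlam : DifferentiableAt ℝ lam t₀)
    (hv : DifferentiableAt ℝ v t₀)
    (heig : ∀ᶠ t in 𝓝 t₀, (C t).mulVec (v t) = lam t • v t)
    (p : Fin n → ℝ)
    (hp : Matrix.vecMul p (C t₀) = lam t₀ • p)
    (hvp : dotProduct (v t₀) p ≠ 0) :
    deriv lam t₀ =
      dotProduct (C'.mulVec (v t₀)) p / dotProduct (v t₀) p :=
  lancaster_eigenvalue_derivative_general n C C' t₀ hC lam v hlam hv heig p hp hvp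
end

section
/- (Leading-order asymptotics of the Turing point near a fold.) Let F : ℝ × ℝ → ℝ be twice continuously differentiable on a neighborhood of (u*, μ*) and suppose F(u*, μ*) = 0, ∂F/∂u(u*, μ*) = 0, a := ∂²F/∂u²(u*, μ*) ≠ 0 and b := ∂F/∂μ(u*, μ*) ≠ 0. Let ε₀ > 0 and let u, μ : (0, ε₀) → ℝ satisfy u(δ) → u* and μ(δ) → μ* as δ → 0⁺, F(u(δ), μ(δ)) = 0 for all δ ∈ (0, ε₀), and ∂F/∂u(u(δ), μ(δ))/δ → c as δ → 0⁺ for some c ∈ ℝ. Then (u(δ) − u*)/δ → c/a and (μ(δ) − μ*)/δ² → −c²/(2ab) as δ → 0⁺. (Applied with c = G_ν*, this yields the expansions uᵗ = u* + (G_ν*/F_uu*)δ + o(δ) and μᵗ = μ* − ((G_ν*)²/(2F_uu*F_μ*))δ² + o(δ²) for the Turing point (uᵗ(δ), μᵗ(δ)) approaching the fold point (u*, μ*) as the distance δ to the co-dimension 2 Turing-fold point tends to 0.) -/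
/-!
Write `p = u - u*` and `q = μ - μ*`. The second-order Taylor expansion of `F` at the fold turns
`F (u, μ) = 0` into `b q + (a p² + β p q + γ q²) / 2 = o(‖(p, q)‖²)`, with `β`, `γ` the remaining
second derivatives, and this forces `q = O(p²)`. The first-order expansion of `F_u` then reads
`F_u (u, μ) = a p + o(p)`, so `F_u / δ → c` gives `p = O(δ)` and `p / δ → c / a`; dividing the
first relation by `δ²` gives `q / δ² → -a (c / a)² / (2 b) = -c² / (2 a b)`.
-/

open Filter Topology Asymptotics Metric

section Taylor

variable {E G : Type*} [NormedAddCommGroup E] [NormedSpace ℝ E]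
  [NormedAddCommGroup G] [NormedSpace ℝ G]

theorem isLittleO_sub_norm_sq_of_fderiv_isLittleO {g : E → G} {g' : E → E →L[ℝ] G}
    (hg : ∀ᶠ h in 𝓝 0, HasFDerivAt g (g' h) h) (hg' : g' =o[𝓝 0] id) :
    (fun h => g h - g 0) =o[𝓝 0] fun h => ‖h‖ ^ 2 := by
  refine isLittleO_iff.2 fun ε hε => ?_
  obtain ⟨r, hr, hball⟩ := eventually_nhds_iff_ball.1 (hg.and (hg'.def hε))
  filter_upwards [ball_mem_nhds 0 hr] with h hh
  -- mean value inequality on `closedBall 0 ‖h‖`, where `‖g' z‖ ≤ ε ‖z‖ ≤ ε ‖h‖`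
  have hsub : closedBall (0 : E) ‖h‖ ⊆ ball 0 r := closedBall_subset_ball (by simpa using hh)
  have hmvt := Convex.norm_image_sub_le_of_norm_hasFDerivWithin_le (s := closedBall 0 ‖h‖)
    (fun z hz => (hball z (hsub hz)).1.hasFDerivWithinAt)
    (fun z hz => (hball z (hsub hz)).2.trans
      (mul_le_mul_of_nonneg_left (by simpa using hz) hε.le)) (convex_closedBall 0 ‖h‖)
    (mem_closedBall_self (norm_nonneg h)) (by simp : h ∈ closedBall (0 : E) ‖h‖)
  simpa [sq, mul_assoc] using hmvt

theorem hasFDerivAt_half_apply_self {B : E →L[ℝ] E →L[ℝ] G} (hB : ∀ v w, B v w = B w v)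
    (z : E) : HasFDerivAt (fun z => (2⁻¹ : ℝ) • B z z) (B z) z := by
  refine ((B.hasFDerivAt_of_bilinear (hasFDerivAt_id z) (hasFDerivAt_id z)).const_smul
    (2⁻¹ : ℝ)).congr_fderiv ?_
  ext k
  simp [hB k z, ← add_smul]
  norm_num

theorem isLittleO_taylor_two_of_hasFDerivAt {F : E → G} {f' : E → E →L[ℝ] G}
    {B : E →L[ℝ] E →L[ℝ] G} {x₀ : E}
    (hF : ∀ᶠ y in 𝓝 x₀, HasFDerivAt F (f' y) y) (hf' : HasFDerivAt f' B x₀) :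
    (fun h => F (x₀ + h) - F x₀ - f' x₀ h - (2⁻¹ : ℝ) • B h h) =o[𝓝 0] fun h => ‖h‖ ^ 2 := by
  have hshift : ∀ᶠ h in 𝓝 (0 : E), HasFDerivAt F (f' (x₀ + h)) (x₀ + h) :=
    (continuous_const_add x₀).tendsto' 0 x₀ (add_zero x₀) |>.eventually hF
  have hg : ∀ᶠ h in 𝓝 (0 : E), HasFDerivAt (fun h => F (x₀ + h) - f' x₀ h - (2⁻¹ : ℝ) • B h h)
      (f' (x₀ + h) - f' x₀ - B h) h := by
    filter_upwards [hshift] with h hh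
    exact ((hh.comp h ((hasFDerivAt_id h).const_add x₀)).sub (f' x₀).hasFDerivAt).sub
      (hasFDerivAt_half_apply_self (second_derivative_symmetric_of_eventually hF hf') h)
  simpa [sub_right_comm _ (F x₀)] using
    isLittleO_sub_norm_sq_of_fderiv_isLittleO hg (hasFDerivAt_iff_isLittleO_nhds_zero.1 hf')

theorem ContDiffAt.hasFDerivAt_fderiv {F : E → G} {x₀ : E} (hF : ContDiffAt ℝ 2 F x₀) :
    HasFDerivAt (fderiv ℝ F) (fderiv ℝ (fderiv ℝ F) x₀) x₀ :=
  ((hF.fderiv_right (m := 1) le_rfl).differentiableAt one_ne_zero).hasFDerivAt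

theorem ContDiffAt.isLittleO_taylor_two {F : E → G} {x₀ : E} (hF : ContDiffAt ℝ 2 F x₀) :
    (fun h => F (x₀ + h) - F x₀ - fderiv ℝ F x₀ h - (2⁻¹ : ℝ) • fderiv ℝ (fderiv ℝ F) x₀ h h)
      =o[𝓝 0] fun h => ‖h‖ ^ 2 :=
  isLittleO_taylor_two_of_hasFDerivAt (hF.eventually (by simp) |>.mono fun _ hy =>
    (hy.differentiableAt two_ne_zero).hasFDerivAt) hF.hasFDerivAt_fderiv

end Taylor

section Plane

variable {G : Type*} [NormedAddCommGroup G] [NormedSpace ℝ G] {F : ℝ × ℝ → G}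

theorem ContinuousLinearMap.apply_prod_eq {M : Type*} [TopologicalSpace M] [AddCommMonoid M]
    [Module ℝ M] (T : ℝ × ℝ →L[ℝ] M) (p q : ℝ) : T (p, q) = p • T (1, 0) + q • T (0, 1) := by
  rw [← map_smul, ← map_smul, ← map_add]
  simp

theorem ContinuousLinearMap.apply_prod_apply_prod (B : ℝ × ℝ →L[ℝ] ℝ × ℝ →L[ℝ] G)
    (p q p' q' : ℝ) :
    B (p, q) (p', q') = (p * p') • B (1, 0) (1, 0) + (p * q') • B (1, 0) (0, 1) +
      (q * p') • B (0, 1) (1, 0) + (q * q') • B (0, 1) (0, 1) := by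
  rw [B.apply_prod_eq p q, add_apply, smul_apply, smul_apply, apply_prod_eq _ p' q',
    apply_prod_eq _ p' q']
  simp only [smul_add, smul_smul]
  abel

theorem HasFDerivAt.hasDerivAt_partial_fst {L : ℝ × ℝ →L[ℝ] G} {x y : ℝ}
    (h : HasFDerivAt F L (x, y)) : HasDerivAt (fun x' => F (x', y)) (L (1, 0)) x :=
  h.comp_hasDerivAt x ((hasDerivAt_id x).prodMk (hasDerivAt_const x y))

theorem HasFDerivAt.hasDerivAt_partial_snd {L : ℝ × ℝ →L[ℝ] G} {x y : ℝ}
    (h : HasFDerivAt F L (x, y)) : HasDerivAt (fun y' => F (x, y')) (L (0, 1)) y :=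
  h.comp_hasDerivAt y ((hasDerivAt_const y x).prodMk (hasDerivAt_id y))

theorem DifferentiableAt.deriv_partial_fst {x y : ℝ} (h : DifferentiableAt ℝ F (x, y)) :
    deriv (fun x' => F (x', y)) x = fderiv ℝ F (x, y) (1, 0) :=
  h.hasFDerivAt.hasDerivAt_partial_fst.deriv

theorem DifferentiableAt.deriv_partial_snd {x y : ℝ} (h : DifferentiableAt ℝ F (x, y)) :
    deriv (fun y' => F (x, y')) y = fderiv ℝ F (x, y) (0, 1) :=
  h.hasFDerivAt.hasDerivAt_partial_snd.deriv

theorem ContDiffAt.deriv_partial_fst_partial_fst {x y : ℝ} (hF : ContDiffAt ℝ 2 F (x, y)) :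
    deriv (fun x' => deriv (fun x'' => F (x'', y)) x') x =
      fderiv ℝ (fderiv ℝ F) (x, y) (1, 0) (1, 0) := by
  have hline : Tendsto (fun x' => (x', y)) (𝓝 x) (𝓝 (x, y)) :=
    (continuous_id.prodMk continuous_const).tendsto x
  have hpartial : (fun x' => deriv (fun x'' => F (x'', y)) x') =ᶠ[𝓝 x]
      fun x' => fderiv ℝ F (x', y) (1, 0) := by
    filter_upwards [hline.eventually (hF.eventually (by simp))] with x' hx'
    exact (hx'.differentiableAt two_ne_zero).deriv_partial_fst
  rw [hpartial.deriv_eq]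
  simpa using (hF.hasFDerivAt_fderiv.hasDerivAt_partial_fst.clm_apply (hasDerivAt_const x _)).deriv

theorem ContDiffAt.isLittleO_deriv_partial_fst {x₀ : ℝ × ℝ} (hF : ContDiffAt ℝ 2 F x₀) :
    (fun h : ℝ × ℝ => deriv (fun x => F (x, x₀.2 + h.2)) (x₀.1 + h.1) -
      deriv (fun x => F (x, x₀.2)) x₀.1 - fderiv ℝ (fderiv ℝ F) x₀ h (1, 0)) =o[𝓝 0] id := by
  have hshift : Tendsto (x₀ + ·) (𝓝 0) (𝓝 x₀) :=
    (continuous_const_add x₀).tendsto' 0 x₀ (add_zero x₀)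
  refine ((ContinuousLinearMap.apply ℝ G ((1 : ℝ), (0 : ℝ))).isBigO_comp _ _).trans_isLittleO
    (hasFDerivAt_iff_isLittleO_nhds_zero.1 hF.hasFDerivAt_fderiv) |>.congr' ?_ .rfl
  filter_upwards [hshift.eventually (hF.eventually (by simp))] with h hh
  rw [(hh.differentiableAt two_ne_zero).deriv_partial_fst,
    (hF.differentiableAt two_ne_zero).deriv_partial_fst]
  rfl

end Plane

section FoldNormalForm

variable {α : Type*} {l : Filter α} {p q δ G : α → ℝ} {a b c d β γ : ℝ}

theorem isBigO_norm_sq_of_fold (hb : b ≠ 0)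
    (hF : (fun x => b * q x + 2⁻¹ * (a * p x ^ 2 + β * p x * q x + γ * q x ^ 2)) =o[l]
      fun x => ‖(p x, q x)‖ ^ 2) :
    q =O[l] fun x => ‖(p x, q x)‖ ^ 2 := by
  set N := fun x => ‖(p x, q x)‖
  have hpN : p =O[l] N := (isBigO_fst_prod (f' := p) (g' := q)).norm_right
  have hqN : q =O[l] N := (isBigO_snd_prod (f' := p) (g' := q)).norm_right
  have hQ : (fun x => a * p x ^ 2 + β * p x * q x + γ * q x ^ 2) =O[l] fun x => N x ^ 2 := by
    simp only [sq]
    exact (((hpN.mul hpN).const_mul_left a).add ((hpN.mul hqN).const_mul_left β |>.congr_left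
      fun x => by ring)).add ((hqN.mul hqN).const_mul_left γ)
  refine ((hF.isBigO.sub (hQ.const_mul_left 2⁻¹)).const_mul_left b⁻¹).congr_left fun x => ?_
  field_simp
  ring

theorem norm_isBigO_of_fold (hb : b ≠ 0) (hp : Tendsto p l (𝓝 0)) (hq : Tendsto q l (𝓝 0))
    (hF : (fun x => b * q x + 2⁻¹ * (a * p x ^ 2 + β * p x * q x + γ * q x ^ 2)) =o[l]
      fun x => ‖(p x, q x)‖ ^ 2) :
    (fun x => ‖(p x, q x)‖) =O[l] p := by
  have hN2 : (fun x => ‖(p x, q x)‖ ^ 2) =o[l] fun x => ‖(p x, q x)‖ :=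
    (isLittleO_pow_id one_lt_two).comp_tendsto (by simpa using (hp.prodMk_nhds hq).norm)
  have hqN : q =o[l] fun x => (p x, q x) :=
    ((isBigO_norm_sq_of_fold hb hF).trans_isLittleO hN2).of_norm_right
  refine (((((isBigO_zero _ _).prod_left (isBigO_refl q l)).trans_isLittleO hqN).right_isBigO_sub
    ).trans ?_).norm_left
  simpa using (isBigO_refl p l).prod_left (isBigO_zero _ _)

theorem isBigO_sq_of_fold (hb : b ≠ 0) (hp : Tendsto p l (𝓝 0)) (hq : Tendsto q l (𝓝 0))
    (hF : (fun x => b * q x + 2⁻¹ * (a * p x ^ 2 + β * p x * q x + γ * q x ^ 2)) =o[l]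
      fun x => ‖(p x, q x)‖ ^ 2) :
    q =O[l] fun x => p x ^ 2 :=
  (isBigO_norm_sq_of_fold hb hF).trans ((norm_isBigO_of_fold hb hp hq hF).pow 2)

theorem isBigO_of_fold_of_div_tendsto (ha : a ≠ 0) (hb : b ≠ 0) (hp : Tendsto p l (𝓝 0))
    (hq : Tendsto q l (𝓝 0)) (hδ : ∀ᶠ x in l, δ x ≠ 0)
    (hF : (fun x => b * q x + 2⁻¹ * (a * p x ^ 2 + β * p x * q x + γ * q x ^ 2)) =o[l]
      fun x => ‖(p x, q x)‖ ^ 2)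
    (hG : (fun x => G x - (a * p x + d * q x)) =o[l] fun x => ‖(p x, q x)‖)
    (hGδ : Tendsto (fun x => G x / δ x) l (𝓝 c)) :
    p =O[l] δ := by
  have hp2 : (fun x => p x ^ 2) =o[l] p := (isLittleO_pow_id one_lt_two).comp_tendsto hp
  have hGap : (fun x => G x - a * p x) =o[l] fun x => a * p x :=
    ((hG.trans_isBigO (norm_isBigO_of_fold hb hp hq hF)).add
      (((isBigO_sq_of_fold hb hp hq hF).trans_isLittleO hp2).const_mul_left d)
      |>.congr_left fun x => by ring).trans_isBigO (isBigO_self_const_mul ha p l)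
  have hpG : p =O[l] G :=
    (isBigO_const_mul_left_iff ha).1 (hGap.right_isBigO_add.congr_right fun x => by ring)
  exact hpG.trans (isBigO_of_div_tendsto_nhds (hδ.mono fun x hx h0 => absurd h0 hx) c hGδ)

theorem tendsto_fold_asymptotics (ha : a ≠ 0) (hb : b ≠ 0) (hp : Tendsto p l (𝓝 0))
    (hq : Tendsto q l (𝓝 0)) (hδ : ∀ᶠ x in l, δ x ≠ 0)
    (hF : (fun x => b * q x + 2⁻¹ * (a * p x ^ 2 + β * p x * q x + γ * q x ^ 2)) =o[l]
      fun x => ‖(p x, q x)‖ ^ 2)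
    (hG : (fun x => G x - (a * p x + d * q x)) =o[l] fun x => ‖(p x, q x)‖)
    (hGδ : Tendsto (fun x => G x / δ x) l (𝓝 c)) :
    Tendsto (fun x => p x / δ x) l (𝓝 (c / a)) ∧
      Tendsto (fun x => q x / δ x ^ 2) l (𝓝 (-c ^ 2 / (2 * a * b))) := by
  have hNp := norm_isBigO_of_fold hb hp hq hF
  have hpδ := isBigO_of_fold_of_div_tendsto ha hb hp hq hδ hF hG hGδ
  have hp2 : (fun x => p x ^ 2) =o[l] p := (isLittleO_pow_id one_lt_two).comp_tendsto hp
  have hqδ : Tendsto (fun x => q x / δ x) l (𝓝 0) :=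
    ((isBigO_sq_of_fold hb hp hq hF).trans_isLittleO (hp2.trans_isBigO hpδ)).tendsto_div_nhds_zero
  have hGδ' : Tendsto (fun x => (G x - (a * p x + d * q x)) / δ x) l (𝓝 0) :=
    (hG.trans_isBigO (hNp.trans hpδ)).tendsto_div_nhds_zero
  have hpδ_lim : Tendsto (fun x => p x / δ x) l (𝓝 (c / a)) := by
    have hlim := ((hGδ.sub (hqδ.const_mul d)).sub hGδ').div_const a
    rw [mul_zero, sub_zero, sub_zero] at hlim
    refine hlim.congr fun x => ?_
    field_simp
    ring
  have hFδ : Tendsto (fun x => (b * q x + 2⁻¹ * (a * p x ^ 2 + β * p x * q x + γ * q x ^ 2)) /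
      δ x ^ 2) l (𝓝 0) :=
    (hF.trans_isBigO (hNp.pow 2 |>.trans (hpδ.pow 2))).tendsto_div_nhds_zero
  have hQδ := ((hpδ_lim.pow 2).const_mul a).add ((hpδ_lim.mul hqδ).const_mul β)
    |>.add ((hqδ.pow 2).const_mul γ)
  refine ⟨hpδ_lim, ?_⟩
  have hlim := (hFδ.sub (hQδ.const_mul 2⁻¹)).div_const b
  rw [show (0 - 2⁻¹ * (a * (c / a) ^ 2 + β * (c / a * 0) + γ * 0 ^ 2)) / b
    = -c ^ 2 / (2 * a * b) by field_simp; ring] at hlim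
  refine hlim.congr' ?_
  filter_upwards [hδ] with x hx
  field_simp
  ring

end FoldNormalForm

/-- leading-order asymptotics of the Turing point near a fold:
if F is C² near (u*,μ*) with F = F_u = 0, a = F_uu ≠ 0 and b = F_μ ≠ 0 there,
and (u(δ),μ(δ)) → (u*,μ*) satisfies F(u(δ),μ(δ)) = 0 with
F_u(u(δ),μ(δ))/δ → c, then (u(δ) − u*)/δ → c/a and (μ(δ) − μ*)/δ² → −c²/(2ab)
as δ → 0⁺. -/
theorem turing_point_fold_asymptotics (F : ℝ × ℝ → ℝ) (ustar mustar : ℝ)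
    (hF : ContDiffAt ℝ 2 F (ustar, mustar))
    (h0 : F (ustar, mustar) = 0)
    (h1 : deriv (fun x => F (x, mustar)) ustar = 0)
    (a b c : ℝ)
    (ha : deriv (fun x => deriv (fun y => F (y, mustar)) x) ustar = a)
    (ha0 : a ≠ 0)
    (hb : deriv (fun m => F (ustar, m)) mustar = b)
    (hb0 : b ≠ 0)
    (ε₀ : ℝ) (hε₀ : 0 < ε₀) (u μ : ℝ → ℝ)
    (hu : Tendsto u (𝓝[>] 0) (𝓝 ustar))
    (hμ : Tendsto μ (𝓝[>] 0) (𝓝 mustar))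
    (hzero : ∀ δ : ℝ, 0 < δ → δ < ε₀ → F (u δ, μ δ) = 0)
    (hc : Tendsto (fun δ => deriv (fun x => F (x, μ δ)) (u δ) / δ) (𝓝[>] 0) (𝓝 c)) :
    Tendsto (fun δ => (u δ - ustar) / δ) (𝓝[>] 0) (𝓝 (c / a)) ∧
    Tendsto (fun δ => (μ δ - mustar) / δ ^ 2) (𝓝[>] 0) (𝓝 (-c ^ 2 / (2 * a * b))) := by
  set B := fderiv ℝ (fderiv ℝ F) (ustar, mustar)
  have hFu : fderiv ℝ F (ustar, mustar) (1, 0) = 0 :=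
    (hF.differentiableAt two_ne_zero).deriv_partial_fst ▸ h1
  have hFμ : fderiv ℝ F (ustar, mustar) (0, 1) = b :=
    (hF.differentiableAt two_ne_zero).deriv_partial_snd ▸ hb
  have hFuu : B (1, 0) (1, 0) = a := hF.deriv_partial_fst_partial_fst ▸ ha
  have hp : Tendsto (fun δ => u δ - ustar) (𝓝[>] 0) (𝓝 0) := by simpa using hu.sub_const ustar
  have hq : Tendsto (fun δ => μ δ - mustar) (𝓝[>] 0) (𝓝 0) := by simpa using hμ.sub_const mustar
  have hpos : ∀ᶠ δ in 𝓝[>] (0 : ℝ), 0 < δ ∧ δ < ε₀ := Ioo_mem_nhdsGT hε₀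
  refine tendsto_fold_asymptotics (β := B (1, 0) (0, 1) + B (0, 1) (1, 0)) (γ := B (0, 1) (0, 1))
    (d := B (0, 1) (1, 0)) ha0 hb0 hp hq (hpos.mono fun δ hδ => hδ.1.ne') ?_ ?_ hc
  · refine (hF.isLittleO_taylor_two.comp_tendsto (hp.prodMk_nhds hq)).neg_left.congr' ?_ .rfl
    filter_upwards [hpos] with δ hδ
    simp only [Function.comp, Prod.mk_add_mk, add_sub_cancel, hzero δ hδ.1 hδ.2, h0]
    rw [ContinuousLinearMap.apply_prod_eq (fderiv ℝ F _), B.apply_prod_apply_prod, hFu, hFμ, hFuu]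
    simp only [smul_eq_mul]
    ring
  · refine (hF.isLittleO_deriv_partial_fst.comp_tendsto (hp.prodMk_nhds hq)).norm_right.congr' ?_
      .rfl
    filter_upwards with δ
    simp only [Function.comp, add_sub_cancel, h1]
    rw [B.apply_prod_apply_prod, hFuu]
    simp only [smul_eq_mul]
    ring
end
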